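/- arXiv:0811.2737 — 4 statements merged into one kernel-verified Lean document; each statement's English description precedes it below -/
import Mathlib

section
/- Let f : (-1, ∞) → ℝ satisfy f(0) = 0 and f' < 0 (so f is strictly decreasing), and suppose Y : ℝ → (-1, ∞) is a continuous T-periodic solution of Y' = f(Y) + A sin(ωt), with T = 2π/ω and A > 0. If moreover f is strictly convex, then the mean value of Y over one period is strictly positive: (1/T) ∫₀ᵀ Y(t) dt > 0. -/
/-!
Integrating the equation over a period, the periodicity of `Y` and the zero mean of `sin (ω t)`
give `⨍ f ∘ Y = 0`. The forcing keeps `Y` from being constant, so strict Jensen yields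
`f (⨍ Y) < ⨍ f ∘ Y = 0 = f 0`, and since `f` is decreasing, `⨍ Y > 0`.
-/

open Real Set Filter intervalIntegral
open MeasureTheory

theorem integral_sin_const_mul_two_pi_div {ω : ℝ} (hω : ω ≠ 0) :
    ∫ t in (0 : ℝ)..2 * π / ω, sin (ω * t) = 0 := by
  rw [integral_comp_mul_left (fun x => sin x) hω, mul_zero, mul_div_cancel₀ _ hω, integral_sin]
  simp

theorem integral_eq_zero_of_hasDerivAt_add {Y g h : ℝ → ℝ} {a b : ℝ}
    (hY : ∀ t ∈ uIcc a b, HasDerivAt Y (g t + h t) t) (hg : IntervalIntegrable g volume a b)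
    (hh : IntervalIntegrable h volume a b) (hYab : Y a = Y b) (hh0 : ∫ t in a..b, h t = 0) :
    ∫ t in a..b, g t = 0 := by
  have hFTC := integral_eq_sub_of_hasDerivAt hY (hg.add hh)
  rwa [integral_add hg hh, hh0, add_zero, hYab, sub_self] at hFTC

theorem not_eqOn_const_of_hasDerivAt_add_sin {Y g : ℝ → ℝ} {A ω : ℝ} (hA : A ≠ 0)
    (hω : 0 < ω) (hY : ∀ t, HasDerivAt Y (g (Y t) + A * sin (ω * t)) t) (c : ℝ) :
    ¬ EqOn Y (fun _ => c) (Ioo 0 (2 * π / ω)) := by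
  intro hc
  have hforced : ∀ t ∈ Ioo 0 (2 * π / ω), g c + A * sin (ω * t) = 0 := by
    intro t ht
    have hY0 : HasDerivAt Y 0 t :=
      (hasDerivAt_const t c).congr_of_eventuallyEq
        (eventually_of_mem (Ioo_mem_nhds ht.1 ht.2) hc)
    simpa only [hc ht] using (hY t).unique hY0
  have hpeak := hforced (π / 2 / ω) ⟨by positivity, by gcongr; linarith [pi_pos]⟩
  have htrough := hforced (3 * π / 2 / ω) ⟨by positivity, by gcongr; linarith [pi_pos]⟩
  rw [mul_div_cancel₀ _ hω.ne', sin_pi_div_two] at hpeak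
  rw [mul_div_cancel₀ _ hω.ne', show 3 * π / 2 = π / 2 + π by ring, sin_add_pi,
    sin_pi_div_two] at htrough
  exact hA (by linarith)

theorem StrictConvexOn.map_intervalAverage_lt {s : Set ℝ} {f Y : ℝ → ℝ} {a b : ℝ}
    (hab : a < b) (hf : StrictConvexOn ℝ s f) (hfc : ContinuousOn f s)
    (hY : ContinuousOn Y (Icc a b)) (hYs : MapsTo Y (Icc a b) s)
    (hY_nonconst : ∀ c, ¬ EqOn Y (fun _ => c) (Ioo a b)) :
    f (⨍ t in a..b, Y t) < ⨍ t in a..b, f (Y t) := by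
  -- Jensen needs a closed convex set of values: the image of `[a, b]`, a compact interval.
  set K := Y '' Icc a b
  have hK_closed : IsClosed K := (isCompact_Icc.image_of_continuousOn hY).isClosed
  have hK_convex : Convex ℝ K := Real.convex_iff_isPreconnected.2 (isPreconnected_Icc.image Y hY)
  have hKs : K ⊆ s := hYs.image_subset
  rw [uIoc_of_le hab.le]
  have hY_K : ∀ᵐ t ∂volume.restrict (Ioc a b), Y t ∈ K :=
    (ae_restrict_iff' measurableSet_Ioc).2 <|
      .of_forall fun t ht => mem_image_of_mem Y (Ioc_subset_Icc_self ht)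
  have hY_not_ae_const (c : ℝ) : ¬ Y =ᵐ[volume.restrict (Ioc a b)] fun _ => c := fun hc =>
    hY_nonconst c <| (Measure.eqOn_Ioc_of_ae_eq volume hc (hY.mono Ioc_subset_Icc_self)
      continuousOn_const).mono Ioo_subset_Ioc_self
  exact ((hf.subset hKs hK_convex).ae_eq_const_or_map_average_lt (hfc.mono hKs) hK_closed hY_K
      (hY.integrableOn_Icc.mono_set Ioc_subset_Icc_self)
      ((hfc.comp hY hYs).integrableOn_Icc.mono_set Ioc_subset_Icc_self)).resolve_left
    (hY_not_ae_const _)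

/-- The mean value of the periodic solution of y' = f(y) + A sin(ωt) is
strictly positive when f is strictly decreasing, strictly convex, f(0)=0. -/
theorem mean_dilatation_pos
    (f Y : ℝ → ℝ) (A ω T : ℝ)
    (hω : 0 < ω) (hT : T = 2 * Real.pi / ω) (hA : 0 < A)
    (hf0 : f 0 = 0)
    (hfanti : StrictAntiOn f (Set.Ioi (-1)))
    (hfconv : StrictConvexOn ℝ (Set.Ioi (-1)) f)
    (hYcont : Continuous Y)
    (hYmem : ∀ t, Y t ∈ Set.Ioi (-1 : ℝ))
    (hYode : ∀ t, HasDerivAt Y (f (Y t) + A * Real.sin (ω * t)) t)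
    (hYper : ∀ t, Y (t + T) = Y t) :
    0 < (1 / T) * ∫ t in (0:ℝ)..T, Y t := by
  have hT_pos : 0 < T := by rw [hT]; positivity
  have hfc : ContinuousOn f (Ioi (-1)) := hfconv.convexOn.continuousOn isOpen_Ioi
  have hfY_cont : Continuous fun t => f (Y t) := hfc.comp_continuous hYcont hYmem
  have hfY_mean : ∫ t in (0:ℝ)..T, f (Y t) = 0 :=
    integral_eq_zero_of_hasDerivAt_add (fun t _ => hYode t) (hfY_cont.intervalIntegrable _ _)
      ((by fun_prop : Continuous fun t => A * sin (ω * t)).intervalIntegrable _ _)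
      (by simpa using (hYper 0).symm)
      (by rw [intervalIntegral.integral_const_mul, hT, integral_sin_const_mul_two_pi_div hω.ne',
        mul_zero])
  have hjensen : f (⨍ t in (0:ℝ)..T, Y t) < 0 := by
    have := hfconv.map_intervalAverage_lt hT_pos hfc hYcont.continuousOn (fun t _ => hYmem t)
      (hT ▸ not_eqOn_const_of_hasDerivAt_add_sin hA.ne' hω hYode)
    rwa [interval_average_eq (fun t => f (Y t)), hfY_mean, smul_zero] at this
  obtain ⟨t₀, -, ht₀⟩ := exists_eq_interval_average hT_pos.ne hYcont.continuousOn
  have hmean_pos : 0 < ⨍ t in (0:ℝ)..T, Y t := by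
    by_contra! hle
    have := hfanti.antitoneOn (ht₀ ▸ hYmem t₀) (by norm_num : (0:ℝ) ∈ Ioi (-1)) hle
    linarith
  rwa [interval_average_eq, sub_zero, smul_eq_mul, ← one_div] at hmean_pos
end

section
/- Let ω > 0, T = 2π/ω, θ = arctan ω, Z(t) = sin(ωt - θ)/√(1+ω²), and let W be the T-periodic solution of W' = -W + f''(0)·Z². Then (1/T)∫₀ᵀ Z(t)³ dt = 0 and (1/T)∫₀ᵀ Z(t)·W(t) dt = 0. -/
/-!
Integrating by parts over a period, `∫ Z W' = -∫ Z' W` and `∫ Z' W' = -∫ Z'' W`. Substituting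
`W' = -W + c Z²` and `Z'' = -ω² Z`, the terms with `c` are `c ∫ Z³` and `c ∫ Z' Z² = c [Z³/3]`,
both zero, so `J = ∫ Z W` and `K = ∫ Z' W` satisfy `J = K` and `-K = ω² J`, whence `(1 + ω²) J = 0`.
For `Z` a multiple of `sin (ω t - θ)`, `∫ Z³ = 0` because `sin³` has the periodic antiderivative
`cos³/3 - cos`.
-/

open Real Set intervalIntegral

theorem integral_mul_deriv_eq_neg_integral_deriv_mul {u u' v v' : ℝ → ℝ} {a b : ℝ}
    (hu : ∀ x ∈ uIcc a b, HasDerivAt u (u' x) x) (hv : ∀ x ∈ uIcc a b, HasDerivAt v (v' x) x)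
    (hu' : IntervalIntegrable u' MeasureTheory.volume a b)
    (hv' : IntervalIntegrable v' MeasureTheory.volume a b) (huv : u b * v b = u a * v a) :
    ∫ x in a..b, u x * v' x = -∫ x in a..b, u' x * v x := by
  rw [integral_mul_deriv_eq_deriv_mul hu hv hu' hv', huv, sub_self, zero_sub]

theorem integral_deriv_mul_pow_eq_zero {u u' : ℝ → ℝ} {a b : ℝ} (n : ℕ)
    (hu : ∀ x ∈ uIcc a b, HasDerivAt u (u' x) x)
    (hint : IntervalIntegrable (fun x => u' x * u x ^ n) MeasureTheory.volume a b)
    (hab : u b = u a) :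
    ∫ x in a..b, u' x * u x ^ n = 0 := by
  have hderiv : ∀ x ∈ uIcc a b,
      HasDerivAt (fun x => u x ^ (n + 1) / (n + 1)) (u' x * u x ^ n) x := by
    intro x hx
    refine (((hu x hx).fun_pow (n + 1)).div_const ((n : ℝ) + 1)).congr_deriv ?_
    field_simp
    push_cast
    ring
  rw [integral_eq_sub_of_hasDerivAt hderiv hint, hab, sub_self]

theorem integral_sin_pow_three_eq_zero {ω : ℝ} (hω : ω ≠ 0) (φ a : ℝ) :
    ∫ t in a..a + 2 * π / ω, sin (ω * t - φ) ^ 3 = 0 := by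
  have hderiv : ∀ t ∈ uIcc a (a + 2 * π / ω),
      HasDerivAt (fun t => (cos (ω * t - φ) ^ 3 / 3 - cos (ω * t - φ)) / ω)
        (sin (ω * t - φ) ^ 3) t := by
    intro t _
    have hcos : HasDerivAt (fun t => cos (ω * t - φ)) (-sin (ω * t - φ) * ω) t := by
      simpa using (((hasDerivAt_id t).const_mul ω).sub_const φ).cos
    refine ((((hcos.fun_pow 3).div_const 3).sub hcos).div_const ω).congr_deriv ?_
    field_simp
    linear_combination -3 * sin (ω * t - φ) * sin_sq_add_cos_sq (ω * t - φ)
  have hperiod : ω * (a + 2 * π / ω) - φ = ω * a - φ + 2 * π := by field_simp; ring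
  rw [integral_eq_sub_of_hasDerivAt hderiv
    (Continuous.intervalIntegrable (by fun_prop) _ _), hperiod, cos_add_two_pi, sub_self]

theorem integral_mul_eq_zero_of_harmonic {Z Z' W : ℝ → ℝ} {ω c a b : ℝ}
    (hZ : ∀ t, HasDerivAt Z (Z' t) t) (hZ' : ∀ t, HasDerivAt Z' (-ω ^ 2 * Z t) t)
    (hW : ∀ t, HasDerivAt W (-W t + c * Z t ^ 2) t)
    (hZab : Z b = Z a) (hZ'ab : Z' b = Z' a) (hWab : W b = W a)
    (hZ3 : ∫ t in a..b, Z t ^ 3 = 0) :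
    ∫ t in a..b, Z t * W t = 0 := by
  have cZ : Continuous Z := continuous_iff_continuousAt.2 fun t => (hZ t).continuousAt
  have cZ' : Continuous Z' := continuous_iff_continuousAt.2 fun t => (hZ' t).continuousAt
  have cW : Continuous W := continuous_iff_continuousAt.2 fun t => (hW t).continuousAt
  have cW' : Continuous fun t => -W t + c * Z t ^ 2 := by fun_prop
  have hZW := integral_mul_deriv_eq_neg_integral_deriv_mul (u := Z) (v := W) (fun t _ => hZ t)
    (fun t _ => hW t) (cZ'.intervalIntegrable a b) (cW'.intervalIntegrable a b)
    (by rw [hZab, hWab])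
  have hZ'W := integral_mul_deriv_eq_neg_integral_deriv_mul (u := Z') (v := W) (fun t _ => hZ' t)
    (fun t _ => hW t) ((by fun_prop : Continuous fun t => -ω ^ 2 * Z t).intervalIntegrable a b)
    (cW'.intervalIntegrable a b) (by rw [hZ'ab, hWab])
  have hZ'Z2 := integral_deriv_mul_pow_eq_zero (u := Z) 2 (fun t _ => hZ t)
    ((cZ'.mul (cZ.pow 2)).intervalIntegrable a b) hZab
  have hsplit : ∀ f : ℝ → ℝ, Continuous f → ∫ t in a..b, f t * (-W t + c * Z t ^ 2) =
      -(∫ t in a..b, f t * W t) + c * ∫ t in a..b, f t * Z t ^ 2 := by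
    intro f hf
    rw [← integral_neg, ← integral_const_mul, ← integral_add
      (Continuous.intervalIntegrable (by fun_prop) a b)
      (Continuous.intervalIntegrable (by fun_prop) a b)]
    simp only [mul_add, mul_neg, mul_left_comm c]
  rw [hsplit Z cZ] at hZW
  simp only [← pow_succ', hZ3] at hZW
  rw [hsplit Z' cZ', hZ'Z2] at hZ'W
  simp only [mul_assoc, integral_const_mul] at hZ'W
  have hJ : (1 + ω ^ 2) * ∫ t in a..b, Z t * W t = 0 := by linarith
  exact (mul_eq_zero.1 hJ).resolve_left (by positivity)

theorem mean_Zcube_and_ZW_zero_general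
    (ω T θ c : ℝ) (hω : 0 < ω) (hT : T = 2 * Real.pi / ω)
    (Z W : ℝ → ℝ)
    (hZ : ∀ t, Z t = Real.sin (ω * t - θ) / Real.sqrt (1 + ω ^ 2))
    (hWode : ∀ t, HasDerivAt W (-W t + c * (Z t) ^ 2) t)
    (hWper : ∀ t, W (t + T) = W t) :
    (1 / T) * (∫ t in (0:ℝ)..T, (Z t) ^ 3) = 0 ∧
    (1 / T) * (∫ t in (0:ℝ)..T, Z t * W t) = 0 := by
  set s := sqrt (1 + ω ^ 2)
  have hphase : ∀ t, HasDerivAt (fun t => ω * t - θ) ω t := fun t => by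
    simpa using ((hasDerivAt_id t).const_mul ω).sub_const θ
  have hZd : ∀ t, HasDerivAt Z (ω * cos (ω * t - θ) / s) t := fun t => by
    rw [show Z = fun t => sin (ω * t - θ) / s from funext hZ]
    simpa [mul_comm] using (hphase t).sin.div_const s
  have hZ'd : ∀ t, HasDerivAt (fun t => ω * cos (ω * t - θ) / s) (-ω ^ 2 * Z t) t := fun t => by
    refine (((hphase t).cos.const_mul ω).div_const s).congr_deriv ?_
    rw [hZ]
    ring
  have hperiod : ω * T - θ = ω * 0 - θ + 2 * π := by
    rw [hT]
    field_simp
    ring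
  have hZ3 : ∫ t in (0:ℝ)..T, Z t ^ 3 = 0 := by
    simp_rw [hZ, div_pow]
    rw [integral_div, hT, ← zero_add (2 * π / ω), integral_sin_pow_three_eq_zero hω.ne', zero_div]
  refine ⟨by rw [hZ3, mul_zero], ?_⟩
  rw [integral_mul_eq_zero_of_harmonic hZd hZ'd hWode ?_ ?_ ?_ hZ3, mul_zero]
  · simp only [hZ, hperiod, sin_add_two_pi]
  · simp only [hperiod, cos_add_two_pi]
  · simpa using hWper 0

/-- Lemma 4.6 computation: the means of Z³ and Z·W vanish, where
Z(t) = sin(ωt-θ)/√(1+ω²) and W is the T-periodic solution of W' = -W + c Z². -/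
theorem mean_Zcube_and_ZW_zero
    (ω T θ c : ℝ) (hω : 0 < ω) (hT : T = 2 * Real.pi / ω)
    (hθ : θ = Real.arctan ω)
    (Z W : ℝ → ℝ)
    (hZ : ∀ t, Z t = Real.sin (ω * t - θ) / Real.sqrt (1 + ω ^ 2))
    (hWode : ∀ t, HasDerivAt W (-W t + c * (Z t) ^ 2) t)
    (hWper : ∀ t, W (t + T) = W t) :
    (1 / T) * (∫ t in (0:ℝ)..T, (Z t) ^ 3) = 0 ∧
    (1 / T) * (∫ t in (0:ℝ)..T, Z t * W t) = 0 :=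
  mean_Zcube_and_ZW_zero_general ω T θ c hω hT Z W hZ hWode hWper
end

section
/- Let a : ℝ → ℝ be continuous, T-periodic, with a(t) < 0 for all t, and b : ℝ → ℝ continuous, T-periodic, with b(t) ≥ 0 for all t and b not identically zero. Then the unique T-periodic solution W of W' = a(t) W + b(t) satisfies W(t) > 0 for all t. -/
open Real Set Filter

/-!
At a minimum `t₀` of the periodic solution, `W'(t₀) = 0` gives `a(t₀) W(t₀) = -b(t₀) ≤ 0`, so
`W ≥ 0` because `a < 0`. The integrating factor makes `W(t) e^{-∫₀ᵗ a}` nondecreasing, so a zero of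
`W` forces `W` to vanish at all earlier times; each of those zeros is a minimum of `W`, where the
equation gives `b = 0`. Since `b` is periodic it would vanish identically.
-/

namespace Function.Periodic

theorem exists_forall_le_of_continuous {α : Type*} [LinearOrder α] [TopologicalSpace α]
    [ClosedIicTopology α] {f : ℝ → α} {c : ℝ} (hp : Periodic f c) (hc : c ≠ 0)
    (hf : Continuous f) : ∃ x, ∀ y, f x ≤ f y := by
  obtain ⟨_, ⟨x, rfl⟩, hx⟩ :=
    (hp.compact_of_continuous hc hf).exists_isLeast (range_nonempty f)
  exact ⟨x, fun y => hx ⟨y, rfl⟩⟩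

theorem eq_zero_of_forall_le_eq_zero {M : Type*} [Zero M] {f : ℝ → M} {c t : ℝ}
    (hp : Periodic f c) (hc : 0 < c) (hf : ∀ s ≤ t, f s = 0) (x : ℝ) : f x = 0 := by
  obtain ⟨y, hy, hxy⟩ := hp.exists_mem_Ioc hc x (t - c)
  rw [hxy]
  exact hf y (by simpa using hy.2)

end Function.Periodic

section LinearODE

variable {a b W : ℝ → ℝ}

theorem nonneg_of_periodic_of_hasDerivAt {T : ℝ} (hT : T ≠ 0) (haneg : ∀ t, a t < 0)
    (hbnonneg : ∀ t, 0 ≤ b t) (hWode : ∀ t, HasDerivAt W (a t * W t + b t) t)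
    (hWper : Function.Periodic W T) (t : ℝ) : 0 ≤ W t := by
  have hWcont : Continuous W := continuous_iff_continuousAt.2 fun t => (hWode t).continuousAt
  obtain ⟨t₀, ht₀⟩ := hWper.exists_forall_le_of_continuous hT hWcont
  have hderiv : a t₀ * W t₀ + b t₀ = 0 :=
    IsLocalMin.hasDerivAt_eq_zero (Eventually.of_forall ht₀) (hWode t₀)
  have hmin : 0 ≤ W t₀ := by nlinarith [haneg t₀, hbnonneg t₀]
  exact hmin.trans (ht₀ t)

theorem hasDerivAt_mul_exp_neg {A : ℝ → ℝ} {t : ℝ} (hW : HasDerivAt W (a t * W t + b t) t)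
    (hA : HasDerivAt A (a t) t) :
    HasDerivAt (fun s => W s * exp (-A s)) (b t * exp (-A t)) t := by
  have hexp : HasDerivAt (fun s => exp (-A s)) (exp (-A t) * -a t) t := hA.neg.exp
  exact (hW.mul hexp).congr_deriv (by ring)

theorem monotone_mul_exp_neg_integral (hacont : Continuous a) (hbnonneg : ∀ t, 0 ≤ b t)
    (hWode : ∀ t, HasDerivAt W (a t * W t + b t) t) :
    Monotone fun t => W t * exp (-∫ x in (0 : ℝ)..t, a x) := by
  have hderiv (t : ℝ) :=
    hasDerivAt_mul_exp_neg (hWode t) (hacont.integral_hasStrictDerivAt 0 t).hasDerivAt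
  refine monotone_of_deriv_nonneg (fun t => (hderiv t).differentiableAt) fun t => ?_
  rw [(hderiv t).deriv]
  exact mul_nonneg (hbnonneg t) (exp_pos _).le

theorem solution_eq_zero_of_le_of_eq_zero (hacont : Continuous a) (hbnonneg : ∀ t, 0 ≤ b t)
    (hWode : ∀ t, HasDerivAt W (a t * W t + b t) t) (hWnonneg : ∀ t, 0 ≤ W t) {s t : ℝ}
    (hst : s ≤ t) (ht : W t = 0) : W s = 0 := by
  have hmono := monotone_mul_exp_neg_integral hacont hbnonneg hWode hst
  simp only [ht, zero_mul] at hmono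
  exact le_antisymm (nonpos_of_mul_nonpos_left hmono (exp_pos _)) (hWnonneg s)

theorem forcing_eq_zero_of_solution_eq_zero (hWode : ∀ t, HasDerivAt W (a t * W t + b t) t)
    (hWnonneg : ∀ t, 0 ≤ W t) {s : ℝ} (hs : W s = 0) : b s = 0 := by
  have hmin : IsLocalMin W s := Eventually.of_forall fun u => hs ▸ hWnonneg u
  simpa [hs] using hmin.hasDerivAt_eq_zero (hWode s)

end LinearODE

theorem periodic_solution_positive_general
    (a b W : ℝ → ℝ) (T : ℝ) (hT : 0 < T)
    (hacont : Continuous a)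
    (haneg : ∀ t, a t < 0)
    (hbper : ∀ t, b (t + T) = b t)
    (hbnonneg : ∀ t, 0 ≤ b t) (hbne : ∃ t, b t ≠ 0)
    (hWode : ∀ t, HasDerivAt W (a t * W t + b t) t)
    (hWper : ∀ t, W (t + T) = W t) :
    ∀ t, 0 < W t := by
  have hWnonneg := nonneg_of_periodic_of_hasDerivAt hT.ne' haneg hbnonneg hWode hWper
  intro t
  refine (hWnonneg t).lt_of_ne fun hWt => ?_
  have hbzero : ∀ s ≤ t, b s = 0 := fun s hst =>
    forcing_eq_zero_of_solution_eq_zero hWode hWnonneg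
      (solution_eq_zero_of_le_of_eq_zero hacont hbnonneg hWode hWnonneg hst hWt.symm)
  obtain ⟨t₁, hbt₁⟩ := hbne
  exact hbt₁ (Function.Periodic.eq_zero_of_forall_le_eq_zero hbper hT hbzero t₁)

/-- Proposition 4.4 (abstract form): the T-periodic solution of
W' = a(t)W + b(t) with a < 0, b ≥ 0, b ≢ 0 is strictly positive. -/
theorem periodic_solution_positive
    (a b W : ℝ → ℝ) (T : ℝ) (hT : 0 < T)
    (hacont : Continuous a) (haper : ∀ t, a (t + T) = a t)
    (haneg : ∀ t, a t < 0)
    (hbcont : Continuous b) (hbper : ∀ t, b (t + T) = b t)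
    (hbnonneg : ∀ t, 0 ≤ b t) (hbne : ∃ t, b t ≠ 0)
    (hWode : ∀ t, HasDerivAt W (a t * W t + b t) t)
    (hWper : ∀ t, W (t + T) = W t) :
    ∀ t, 0 < W t :=
  periodic_solution_positive_general a b W T hT hacont haneg hbper hbnonneg hbne hWode hWper
end

section
/- Let f : (-1, ∞) → ℝ be C¹, strictly decreasing, strictly convex, f(0) = 0, with f(y) → +∞ as y → -1⁺, and 0 < A < |inf f|. Suppose Y is the T-periodic solution of Y' = f(Y) + A sin(ωt) (T = 2π/ω). Then min_{t} Y(t) ≥ f⁻¹(A) > -1 and max_t Y(t) ≤ f⁻¹(-A); in particular -1 < Y(t) for all t, i.e., the crack never fully closes at subcritical forcing. -/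
/-!
A continuous periodic function attains its minimum and maximum, and at such a point the
derivative of a solution vanishes. Below `a = f⁻¹(A)` the vector field `f(y) + A sin(ωt)` is
positive, since `f` is decreasing, so the minimum of the periodic solution cannot lie below `a`;
symmetrically, above `b = f⁻¹(-A)` the field is negative, so the maximum cannot lie above `b`.
-/

open Real Set Filter

namespace Function.Periodic

variable {Y Y' : ℝ → ℝ} {T a : ℝ}

theorem exists_isMinOn_univ (hper : Periodic Y T) (hT : T ≠ 0) (hY : Continuous Y) :
    ∃ t₀, IsMinOn Y univ t₀ := by
  obtain ⟨_, ⟨t₀, rfl⟩, hleast⟩ :=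
    (hper.compact_of_continuous hT hY).exists_isLeast (range_nonempty Y)
  exact ⟨t₀, fun t _ => hleast (mem_range_self t)⟩

theorem le_of_hasDerivAt_pos_of_lt (hper : Periodic Y T) (hT : T ≠ 0)
    (hY : ∀ t, HasDerivAt Y (Y' t) t) (hpos : ∀ t, Y t < a → 0 < Y' t) (t : ℝ) :
    a ≤ Y t := by
  obtain ⟨t₀, hmin⟩ :=
    hper.exists_isMinOn_univ hT (continuous_iff_continuousAt.2 fun t => (hY t).continuousAt)
  have hcrit : Y' t₀ = 0 := (hmin.isLocalMin univ_mem).hasDerivAt_eq_zero (hY t₀)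
  have hmin_ge : a ≤ Y t₀ := not_lt.1 fun hlt => (hpos t₀ hlt).ne' hcrit
  exact hmin_ge.trans (hmin (mem_univ t))

theorem le_of_hasDerivAt_neg_of_gt (hper : Periodic Y T) (hT : T ≠ 0)
    (hY : ∀ t, HasDerivAt Y (Y' t) t) (hneg : ∀ t, a < Y t → Y' t < 0) (t : ℝ) :
    Y t ≤ a := by
  have hper_neg : Periodic (-Y) T := fun t => congrArg Neg.neg (hper t)
  exact neg_le_neg_iff.1 <| hper_neg.le_of_hasDerivAt_pos_of_lt hT (fun t => (hY t).neg)
    (fun t ht => neg_pos.2 (hneg t (neg_lt_neg_iff.1 ht))) t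

end Function.Periodic

theorem neg_le_mul_sin {A : ℝ} (hA : 0 ≤ A) (x : ℝ) : -A ≤ A * sin x := by
  nlinarith [neg_one_le_sin x]

theorem mul_sin_le {A : ℝ} (hA : 0 ≤ A) (x : ℝ) : A * sin x ≤ A :=
  mul_le_of_le_one_right hA (sin_le_one x)

theorem periodic_solution_bounds_general
    (f Y : ℝ → ℝ) (A ω T a b : ℝ)
    (hω : 0 < ω) (hT : T = 2 * Real.pi / ω) (hA : 0 < A)
    (hfanti : StrictAntiOn f (Set.Ioi (-1)))
    -- a = f⁻¹(A), b = f⁻¹(-A), encoding 0 < A < |inf f|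
    (ha : a ∈ Set.Ioi (-1 : ℝ)) (hfa : f a = A)
    (hb : b ∈ Set.Ioi (-1 : ℝ)) (hfb : f b = -A)
    (hYmem : ∀ t, Y t ∈ Set.Ioi (-1 : ℝ))
    (hYode : ∀ t, HasDerivAt Y (f (Y t) + A * Real.sin (ω * t)) t)
    (hYper : ∀ t, Y (t + T) = Y t) :
    ∀ t, a ≤ Y t ∧ Y t ≤ b ∧ -1 < Y t := by
  have hT0 : T ≠ 0 := by rw [hT]; positivity
  have lower_fence : ∀ t, Y t < a → 0 < f (Y t) + A * sin (ω * t) := fun t hlt => by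
    have : f a < f (Y t) := hfanti (hYmem t) ha hlt
    linarith [neg_le_mul_sin hA.le (ω * t)]
  have upper_fence : ∀ t, b < Y t → f (Y t) + A * sin (ω * t) < 0 := fun t hgt => by
    have : f (Y t) < f b := hfanti hb (hYmem t) hgt
    linarith [mul_sin_le hA.le (ω * t)]
  intro t
  exact ⟨Function.Periodic.le_of_hasDerivAt_pos_of_lt hYper hT0 hYode lower_fence t,
    Function.Periodic.le_of_hasDerivAt_neg_of_gt hYper hT0 hYode upper_fence t, hYmem t⟩

/-- The periodic solution stays in the funnel [f⁻¹(A), f⁻¹(-A)]; in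
particular the crack never fully closes at subcritical forcing. -/
theorem periodic_solution_bounds
    (f Y : ℝ → ℝ) (A ω T a b : ℝ)
    (hω : 0 < ω) (hT : T = 2 * Real.pi / ω) (hA : 0 < A)
    (hfC1 : ContDiffOn ℝ 1 f (Set.Ioi (-1)))
    (hfanti : StrictAntiOn f (Set.Ioi (-1)))
    (hfconv : StrictConvexOn ℝ (Set.Ioi (-1)) f)
    (hf0 : f 0 = 0)
    (htop : Filter.Tendsto f (nhdsWithin (-1) (Set.Ioi (-1))) Filter.atTop)
    -- a = f⁻¹(A), b = f⁻¹(-A), encoding 0 < A < |inf f|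
    (ha : a ∈ Set.Ioi (-1 : ℝ)) (hfa : f a = A)
    (hb : b ∈ Set.Ioi (-1 : ℝ)) (hfb : f b = -A)
    (hYmem : ∀ t, Y t ∈ Set.Ioi (-1 : ℝ))
    (hYode : ∀ t, HasDerivAt Y (f (Y t) + A * Real.sin (ω * t)) t)
    (hYper : ∀ t, Y (t + T) = Y t) :
    ∀ t, a ≤ Y t ∧ Y t ≤ b ∧ -1 < Y t :=
  periodic_solution_bounds_general f Y A ω T a b hω hT hA hfanti ha hfa hb hfb hYmem hYode hYper
end
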